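/- For i = 1, 2 let Gᵢ be a finite abelian group, let qᵢ : Gᵢ → ℚ/2ℤ be a quadratic form with associated symmetric bilinear form bᵢ : Gᵢ × Gᵢ → ℚ/ℤ, and let f : G₁ → G₂ be an isomorphism of abelian groups. Then the following are equivalent: (1) f preserves the quadratic forms, i.e., q₂(f(x)) = q₁(x) for all x ∈ G₁; (2) f preserves the bilinear forms, i.e., b₂(f(x), f(y)) = b₁(x, y) for all x, y ∈ G₁, and q₂(f(x)) = q₁(x) for all x in the Sylow 2-subgroup of G₁ (equivalently, for all x ∈ G₁ of 2-power order). -/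

import Mathlib

/-!
If `f` preserves the bilinear forms, the polarization identities show that the defect
`d x = q₂ (f x) - q₁ x` is additive; being also even (`q(-x) = q(x)`), it satisfies
`2 • d = 0`.
For `x` of order `2 ^ k * m` with `m` odd, `m • x` has `2`-power order, so
`d x = m • d x = d (m • x) = 0`.
-/

theorem nsmul_eq_self_of_odd {M : Type*} [AddMonoid M] {a : M} (ha : 2 • a = 0) {m : ℕ}
    (hm : Odd m) : m • a = a := by
  obtain ⟨c, rfl⟩ := hm
  rw [add_nsmul, one_nsmul, mul_nsmul, ha, nsmul_zero, zero_add]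

theorem apply_neg_eq_of_map_zsmul_eq_sq_smul {G M : Type*} [AddGroup G] [AddGroup M]
    {q : G → M} (hq : ∀ (n : ℤ) (x : G), q (n • x) = n ^ 2 • q x) (x : G) :
    q (-x) = q x := by
  simpa using hq (-1) x

namespace AddMonoidHom

variable {G M : Type*}

theorem two_nsmul_apply_eq_zero_of_apply_neg [AddGroup G] [AddMonoid M] (φ : G →+ M)
    (hφ : ∀ x, φ (-x) = φ x) (x : G) : 2 • φ x = 0 := by
  calc 2 • φ x = φ (-x) + φ x := by rw [two_nsmul, hφ]
    _ = 0 := by rw [← map_add, neg_add_cancel, map_zero]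

theorem apply_eq_zero_of_vanishes_on_two_power_torsion [AddMonoid G] [AddMonoid M]
    (φ : G →+ M) (hφ2 : ∀ x, 2 • φ x = 0)
    (hφ : ∀ x, (∃ k : ℕ, 2 ^ k • x = 0) → φ x = 0)
    {x : G} (hx : IsOfFinAddOrder x) : φ x = 0 := by
  obtain ⟨k, m, hm, hkm⟩ := Nat.exists_eq_two_pow_mul_odd hx.addOrderOf_pos.ne'
  have hmx : 2 ^ k • m • x = 0 := by rw [← mul_nsmul', ← hkm, addOrderOf_nsmul_eq_zero]
  calc φ x = m • φ x := (nsmul_eq_self_of_odd (hφ2 x) hm).symm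
    _ = 0 := by rw [← map_nsmul, hφ _ ⟨k, hmx⟩]

end AddMonoidHom

theorem quadratic_form_iso_iff_isometry_and_two_part
    {G₁ G₂ : Type*} [AddCommGroup G₁] [AddCommGroup G₂] [Finite G₁]
    (q₁ : G₁ → AddCircle (2 : ℚ)) (b₁ : G₁ → G₁ → AddCircle (1 : ℚ))
    (q₂ : G₂ → AddCircle (2 : ℚ)) (b₂ : G₂ → G₂ → AddCircle (1 : ℚ))
    (hq₁smul : ∀ (n : ℤ) (x : G₁), q₁ (n • x) = n ^ 2 • q₁ x)
    (hq₂smul : ∀ (n : ℤ) (x : G₂), q₂ (n • x) = n ^ 2 • q₂ x)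
    (hq₁polar : ∀ x y : G₁, q₁ (x + y) - q₁ x - q₁ y =
      AddCircle.equivAddCircle (1 : ℚ) (2 : ℚ) one_ne_zero two_ne_zero (b₁ x y))
    (hq₂polar : ∀ x y : G₂, q₂ (x + y) - q₂ x - q₂ y =
      AddCircle.equivAddCircle (1 : ℚ) (2 : ℚ) one_ne_zero two_ne_zero (b₂ x y))
    (f : G₁ ≃+ G₂) :
    (∀ x : G₁, q₂ (f x) = q₁ x) ↔
      ((∀ x y : G₁, b₂ (f x) (f y) = b₁ x y) ∧
        ∀ x : G₁, (∃ k : ℕ, 2 ^ k • x = 0) → q₂ (f x) = q₁ x) := by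
  refine ⟨fun h => ⟨fun x y => ?_, fun x _ => h x⟩, fun ⟨hb, htwo⟩ x => ?_⟩
  · apply (AddCircle.equivAddCircle (1 : ℚ) (2 : ℚ) one_ne_zero two_ne_zero).injective
    rw [← hq₂polar, ← hq₁polar, ← map_add f, h, h, h]
  · let d : G₁ →+ AddCircle (2 : ℚ) :=
      AddMonoidHom.mk' (fun a => q₂ (f a) - q₁ a) fun a c => by
        have hpolar := hq₂polar (f a) (f c)
        rw [← map_add, hb, ← hq₁polar, ← sub_eq_zero] at hpolar
        rw [← sub_eq_zero, ← hpolar]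
        abel
    have hd_neg (a : G₁) : d (-a) = d a := by
      change q₂ (f (-a)) - q₁ (-a) = q₂ (f a) - q₁ a
      rw [map_neg, apply_neg_eq_of_map_zsmul_eq_sq_smul hq₁smul,
        apply_neg_eq_of_map_zsmul_eq_sq_smul hq₂smul]
    have hd_two_power (a : G₁) (ha : ∃ k : ℕ, 2 ^ k • a = 0) : d a = 0 :=
      sub_eq_zero.mpr (htwo a ha)
    exact sub_eq_zero.mp (d.apply_eq_zero_of_vanishes_on_two_power_torsion
      (d.two_nsmul_apply_eq_zero_of_apply_neg hd_neg) hd_two_power (isOfFinAddOrder_of_finite x))
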